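/- arXiv:1605.05398 — 2 statements merged into one kernel-verified Lean document; each statement's English description precedes it below -/
import Mathlib

section
/- Let K be a totally real number field of degree n with real embeddings σ₁,…,σₙ, O its ring of integers, and I an ideal with N(I) ≥ 40^{n/2}. Let A ∈ Γ(I) ⊆ SL₂(O) with y₀ = (tr(A)−2)/2 ≠ 0, and suppose |tr(σᵢ(A))| ≥ 8 for all i = 1,…,n. Then for every z = (z₁,…,zₙ) ∈ (ℍ²)ⁿ, the product distance satisfies d(z, Az) = √(Σᵢ d_{ℍ²}(zᵢ, σᵢ(A)zᵢ)²) ≥ (4/√n)·log(N(I)) − 2√n·log(8). -/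
/-!
Put `x = tr A - 2`. As `A ≡ 1 mod I`, the relation `ad - bc = 1` gives
`x = bc - (a - 1)(d - 1) ∈ I²`, hence `N(I)² ≤ |N(x)| = ∏ᵢ |σᵢ x|`. For `g ∈ SL₂(ℝ)` with trace `t`,
`cosh d(z, gz) = 1 + |c z² + (d - a) z - b|² / (2 (Im z)²) ≥ t²/2 - 1`, so `g` moves every point by
at least `2 log (|t| - 1)`, and `|σᵢ x| ≤ |tᵢ| + 2 ≤ 2 (|tᵢ| - 1)`. Summing over `i`, the `ℓ¹`-norm
of the displacement vector is at least `4 log N(I) - 2n log 2`, and its `ℓ²`-norm is at least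
`1/√n` times that.
-/

open Matrix MatrixGroups

lemma Real.cosh_two_mul_log_sub_one_le {t : ℝ} (ht : 2 ≤ t) :
    Real.cosh (2 * Real.log (t - 1)) ≤ t ^ 2 / 2 - 1 := by
  have hu : 1 ≤ (t - 1) ^ 2 := one_le_pow₀ (by linarith)
  have hu_inv : ((t - 1) ^ 2)⁻¹ ≤ 1 := inv_le_one_of_one_le₀ hu
  rw [show 2 * Real.log (t - 1) = Real.log ((t - 1) ^ 2) by rw [Real.log_pow]; norm_num,
    Real.cosh_eq, Real.exp_neg, Real.exp_log (by linarith)]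
  nlinarith

namespace UpperHalfPlane

lemma im_specialLinearGroup_smul (g : SL(2, ℝ)) (z : ℍ) :
    (g • z).im = z.im / Complex.normSq (g 1 0 * z + g 1 1) := by
  simp only [MulAction.compHom_smul_def, im_smul_eq_div_normSq,
    Matrix.SpecialLinearGroup.det_mapGL, Units.val_one, abs_one, one_mul]
  rfl

lemma cosh_dist_specialLinearGroup_smul (g : SL(2, ℝ)) (z : ℍ) :
    Real.cosh (dist z (g • z)) =
      1 + Complex.normSq (g 1 0 * (z : ℂ) ^ 2 + (g 1 1 - g 0 0) * z - g 0 1) / (2 * z.im ^ 2) := by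
  have hD : (g 1 0 * z + g 1 1 : ℂ) ≠ 0 :=
    denom_ne_zero_of_im (SpecialLinearGroup.mapGL ℝ g) z.im_ne_zero
  have hsub : (z : ℂ) - (g • z : ℍ) =
      (g 1 0 * (z : ℂ) ^ 2 + (g 1 1 - g 0 0) * z - g 0 1) / (g 1 0 * z + g 1 1) := by
    simp only [coe_specialLinearGroup_apply, Algebra.algebraMap_self, RingHom.id_apply]
    rw [eq_div_iff hD, sub_mul, div_mul_cancel₀ _ hD]
    ring
  have hDpos : 0 < Complex.normSq (g 1 0 * z + g 1 1) := Complex.normSq_pos.mpr hD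
  rw [cosh_dist, im_specialLinearGroup_smul, dist_eq_norm, ← Complex.normSq_eq_norm_sq, hsub,
    Complex.normSq_div]
  field_simp

lemma sq_trace_div_two_sub_one_le_cosh_dist_smul (g : SL(2, ℝ)) (z : ℍ) :
    (trace g.1) ^ 2 / 2 - 1 ≤ Real.cosh (dist z (g • z)) := by
  have hdet : g 0 0 * g 1 1 - g 0 1 * g 1 0 = 1 := by
    rw [← det_fin_two]; exact g.det_coe
  have hnormSq : Complex.normSq (g 1 0 * (z : ℂ) ^ 2 + (g 1 1 - g 0 0) * z - g 0 1) =
      ((trace g.1) ^ 2 - 4) * z.im ^ 2 +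
        (g 1 0 * (z.re ^ 2 + z.im ^ 2) + (g 1 1 - g 0 0) * z.re - g 0 1) ^ 2 := by
    simp only [pow_two, Complex.normSq_apply, Complex.sub_re, Complex.add_re, Complex.mul_re,
      Complex.ofReal_re, coe_re, coe_im, Complex.ofReal_im, Complex.mul_im, zero_mul, sub_zero,
      Complex.sub_im, sub_self, Complex.add_im, add_zero, trace_fin_two]
    linear_combination (-4 * z.im ^ 2) * hdet
  have hy : 0 < z.im := z.im_pos
  rw [cosh_dist_specialLinearGroup_smul, hnormSq]
  calc (trace g.1) ^ 2 / 2 - 1 = 1 + ((trace g.1) ^ 2 - 4) * z.im ^ 2 / (2 * z.im ^ 2) := by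
        field_simp; ring
    _ ≤ _ := by gcongr; exact le_add_of_nonneg_right (sq_nonneg _)

lemma two_mul_log_abs_trace_sub_one_le_dist_smul (g : SL(2, ℝ)) (z : ℍ)
    (htr : 2 ≤ |trace g.1|) :
    2 * Real.log (|trace g.1| - 1) ≤ dist z (g • z) := by
  have hcosh := (Real.cosh_two_mul_log_sub_one_le htr).trans
    (sq_abs (trace g.1) ▸ sq_trace_div_two_sub_one_le_cosh_dist_smul g z)
  have hlog : 0 ≤ Real.log (|trace g.1| - 1) := Real.log_nonneg (by linarith)
  have := Real.cosh_le_cosh.mp hcosh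
  rwa [abs_of_nonneg dist_nonneg, abs_of_nonneg (mul_nonneg zero_le_two hlog)] at this

lemma two_mul_log_abs_trace_sub_two_le_dist_smul_add (g : SL(2, ℝ)) (z : ℍ)
    (htr : 4 ≤ |trace g.1|) :
    2 * Real.log |trace g.1 - 2| ≤ dist z (g • z) + 2 * Real.log 2 := by
  have hlower := abs_sub_abs_le_abs_sub (trace g.1) 2
  have hupper := abs_sub (trace g.1) (2 : ℝ)
  rw [abs_two] at hlower hupper
  have hlog : Real.log |trace g.1 - 2| ≤ Real.log (|trace g.1| - 1) + Real.log 2 := by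
    rw [← Real.log_mul (by linarith) two_ne_zero]
    exact Real.log_le_log (by linarith) (by linarith)
  linarith [two_mul_log_abs_trace_sub_one_le_dist_smul g z (by linarith)]

end UpperHalfPlane

open NumberField

lemma Matrix.SpecialLinearGroup.trace_sub_two_mem_sq_of_mem_ker {R : Type*} [CommRing R]
    (I : Ideal R) (A : SL(2, R)) (hA : A ∈ (SpecialLinearGroup.map (Ideal.Quotient.mk I)).ker) :
    trace A.1 - 2 ∈ I ^ 2 := by
  have hentry (i j : Fin 2) : A i j - (1 : Matrix (Fin 2) (Fin 2) R) i j ∈ I :=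
    Ideal.Quotient.eq.mp <| by
      simpa [Matrix.one_apply, apply_ite] using
        congrArg (fun B : SL(2, R ⧸ I) ↦ B i j) (MonoidHom.mem_ker.mp hA)
  have hdet : A 0 0 * A 1 1 - A 0 1 * A 1 0 = 1 := by rw [← det_fin_two]; exact A.det_coe
  have hx : trace A.1 - 2 = A 0 1 * A 1 0 - (A 0 0 - 1) * (A 1 1 - 1) := by
    rw [trace_fin_two]; linear_combination hdet
  rw [hx, sq]
  exact sub_mem (Ideal.mul_mem_mul (by simpa using hentry 0 1) (by simpa using hentry 1 0))
    (Ideal.mul_mem_mul (by simpa using hentry 0 0) (by simpa using hentry 1 1))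

lemma Ideal.absNorm_sq_dvd_natAbs_norm {S : Type*} [CommRing S] [IsDedekindDomain S]
    [Module.Free ℤ S] [Module.Finite ℤ S] {I : Ideal S} {x : S} (hx : x ∈ I ^ 2) :
    absNorm I ^ 2 ∣ (Algebra.norm ℤ x).natAbs := by
  rw [← map_pow, ← absNorm_span_singleton]
  exact absNorm_dvd_absNorm_of_le ((span_singleton_le_iff_mem _).mpr hx)

lemma NumberField.abs_norm_eq_prod_real_embeddings {K : Type*} [Field K] [NumberField K]
    (hcard : Fintype.card (K →+* ℝ) = Module.finrank ℚ K) (x : K) :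
    |(Algebra.norm ℚ x : ℝ)| = ∏ τ : K →+* ℝ, |τ x| := by
  have hbij : Function.Bijective (fun τ : K →+* ℝ ↦ Complex.ofRealHom.comp τ) := by
    refine (Fintype.bijective_iff_injective_and_card _).mpr ⟨fun τ₁ τ₂ h ↦ ?_, ?_⟩
    · ext k; exact Complex.ofReal_injective (RingHom.congr_fun h k)
    · rw [hcard, Embeddings.card K ℂ]
  calc |(Algebra.norm ℚ x : ℝ)| = ‖algebraMap ℚ ℂ (Algebra.norm ℚ x)‖ := by
        rw [eq_ratCast, ← Complex.ofReal_ratCast, Complex.norm_real, Real.norm_eq_abs]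
    _ = ∏ φ : K →ₐ[ℚ] ℂ, ‖φ x‖ := by rw [Algebra.norm_eq_prod_embeddings, norm_prod]
    _ = ∏ φ : K →+* ℂ, ‖φ x‖ :=
        Fintype.prod_equiv (RingHom.equivRatAlgHom K ℂ).symm _ _ fun _ ↦ rfl
    _ = ∏ τ : K →+* ℝ, |τ x| :=
        (Fintype.prod_bijective _ hbij _ _ fun τ ↦ by simp).symm

lemma NumberField.two_mul_log_absNorm_le_sum_log {K : Type*} [Field K] [NumberField K]
    (hcard : Fintype.card (K →+* ℝ) = Module.finrank ℚ K) {I : Ideal (𝓞 K)} {x : 𝓞 K}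
    (hx : x ≠ 0) (hxI : x ∈ I ^ 2) :
    2 * Real.log (Ideal.absNorm I) ≤ ∑ τ : K →+* ℝ, Real.log |τ x| := by
  have hdvd := Ideal.absNorm_sq_dvd_natAbs_norm hxI
  have hnorm : 0 < (Algebra.norm ℤ x).natAbs :=
    Int.natAbs_pos.mpr (Algebra.norm_ne_zero_iff.mpr hx)
  have hprod : ((Algebra.norm ℤ x).natAbs : ℝ) = ∏ τ : K →+* ℝ, |τ x| := by
    rw [← abs_norm_eq_prod_real_embeddings hcard, ← Algebra.coe_norm_int, Nat.cast_natAbs,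
      Int.cast_abs, Rat.cast_intCast]
  calc 2 * Real.log (Ideal.absNorm I) = Real.log ((Ideal.absNorm I ^ 2 : ℕ) : ℝ) := by
        rw [Nat.cast_pow, Real.log_pow]; norm_num
    _ ≤ Real.log ((Algebra.norm ℤ x).natAbs : ℝ) :=
        Real.log_le_log (by exact_mod_cast Nat.pos_of_dvd_of_pos hdvd hnorm)
          (by exact_mod_cast Nat.le_of_dvd hnorm hdvd)
    _ = ∑ τ : K →+* ℝ, Real.log |τ x| := by
        rw [hprod, Real.log_prod fun τ _ ↦ by simpa using hx]

lemma Real.sum_div_sqrt_card_le_sqrt_sum_sq {ι : Type*} [Fintype ι] (d : ι → ℝ) :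
    (∑ i, d i) / √(Fintype.card ι) ≤ √(∑ i, d i ^ 2) := by
  refine (le_abs_self _).trans (Real.abs_le_sqrt ?_)
  rw [div_pow, Real.sq_sqrt (Fintype.card ι).cast_nonneg]
  exact div_le_of_le_mul₀ (Fintype.card ι).cast_nonneg (by positivity)
    (by simpa [mul_comm] using sq_sum_le_card_mul_sum_sq (s := Finset.univ) (f := d))

theorem stmt15_general (K : Type*) [Field K] [NumberField K]
    (n : ℕ) (hn : n = Module.finrank ℚ K)
    (σ : Fin n ≃ (K →+* ℝ))
    (I : Ideal (NumberField.RingOfIntegers K))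
    (A : SL(2, NumberField.RingOfIntegers K))
    (hA : A ∈ (Matrix.SpecialLinearGroup.map (Ideal.Quotient.mk I)).ker)
    (hy₀ : (algebraMap (NumberField.RingOfIntegers K) K (Matrix.trace A.1) - 2) / 2 ≠ 0)
    (htr : ∀ i : Fin n,
      |Matrix.trace (A.1.map ((σ i).comp
        (algebraMap (NumberField.RingOfIntegers K) K)))| ≥ 8) :
    ∀ z : Fin n → UpperHalfPlane,
      Real.sqrt (∑ i, (dist (z i)
          ((Matrix.SpecialLinearGroup.map
            ((σ i).comp (algebraMap (NumberField.RingOfIntegers K) K)) A) • z i)) ^ 2) ≥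
        (4 / Real.sqrt n) * Real.log (Ideal.absNorm I) - 2 * Real.sqrt n * Real.log 8 := by
  intro z
  set f : Fin n → (𝓞 K →+* ℝ) := fun i ↦ (σ i).comp (algebraMap (𝓞 K) K)
  set d : Fin n → ℝ := fun i ↦ dist (z i) (SpecialLinearGroup.map (f i) A • z i)
  set x : 𝓞 K := trace A.1 - 2
  have hx : x ≠ 0 := fun h ↦ hy₀ <| by rw [sub_eq_zero.mp h, map_ofNat]; norm_num
  have hcard : Fintype.card (K →+* ℝ) = Module.finrank ℚ K := by
    rw [← hn, ← Fintype.card_congr σ, Fintype.card_fin]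
  have hnorm : 2 * Real.log (Ideal.absNorm I) ≤ ∑ i, Real.log |σ i x| :=
    (two_mul_log_absNorm_le_sum_log hcard hx
      (SpecialLinearGroup.trace_sub_two_mem_sq_of_mem_ker I A hA)).trans_eq
      (Equiv.sum_comp σ fun τ ↦ Real.log |τ x|).symm
  have hdist (i : Fin n) : 2 * Real.log |σ i x| ≤ d i + 2 * Real.log 2 := by
    have htr_i : trace (SpecialLinearGroup.map (f i) A).1 = σ i x + 2 :=
      (AddMonoidHom.map_trace (f i) A.1).symm.trans (by simp [x, f, map_ofNat])
    have := UpperHalfPlane.two_mul_log_abs_trace_sub_two_le_dist_smul_add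
      (SpecialLinearGroup.map (f i) A) (z i) ((htr i).trans' (by norm_num))
    rwa [htr_i, add_sub_cancel_right] at this
  have hsum : 4 * Real.log (Ideal.absNorm I) - 2 * n * Real.log 8 ≤ ∑ i, d i := by
    have := Finset.sum_le_sum fun i (_ : i ∈ Finset.univ) ↦ hdist i
    rw [← Finset.mul_sum, Finset.sum_add_distrib, Finset.sum_const, Finset.card_univ,
      Fintype.card_fin, nsmul_eq_mul] at this
    have hlog : Real.log 2 ≤ Real.log 8 := Real.log_le_log (by norm_num) (by norm_num)
    nlinarith
  have hn_pos : (0 : ℝ) < √n := Real.sqrt_pos.mpr (by exact_mod_cast hn ▸ Module.finrank_pos)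
  calc 4 / √n * Real.log (Ideal.absNorm I) - 2 * √n * Real.log 8
      = (4 * Real.log (Ideal.absNorm I) - 2 * n * Real.log 8) / √n := by
        field_simp
        rw [Real.sq_sqrt n.cast_nonneg]; ring
    _ ≤ (∑ i, d i) / √n := by gcongr
    _ ≤ √(∑ i, d i ^ 2) := by simpa using Real.sum_div_sqrt_card_le_sqrt_sum_sq d

/-- If `N(I) ≥ 40^{n/2}` and `A ∈ Γ(I)` has `y₀ = (tr A − 2)/2 ≠ 0`, then for every
`z ∈ (ℍ²)ⁿ`, `d(z, Az) ≥ (4/√n) log N(I) − 2√n log 8`. -/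
theorem stmt15 (K : Type*) [Field K] [NumberField K]
    (n : ℕ) (hn : n = Module.finrank ℚ K)
    (σ : Fin n ≃ (K →+* ℝ))
    (I : Ideal (NumberField.RingOfIntegers K))
    (hI : (Ideal.absNorm I : ℝ) ≥ 40 ^ ((n : ℝ) / 2))
    (A : SL(2, NumberField.RingOfIntegers K))
    (hA : A ∈ (Matrix.SpecialLinearGroup.map (Ideal.Quotient.mk I)).ker)
    (hy₀ : (algebraMap (NumberField.RingOfIntegers K) K (Matrix.trace A.1) - 2) / 2 ≠ 0)
    (htr : ∀ i : Fin n,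
      |Matrix.trace (A.1.map ((σ i).comp
        (algebraMap (NumberField.RingOfIntegers K) K)))| ≥ 8) :
    ∀ z : Fin n → UpperHalfPlane,
      Real.sqrt (∑ i, (dist (z i)
          ((Matrix.SpecialLinearGroup.map
            ((σ i).comp (algebraMap (NumberField.RingOfIntegers K) K)) A) • z i)) ^ 2) ≥
        (4 / Real.sqrt n) * Real.log (Ideal.absNorm I) - 2 * Real.sqrt n * Real.log 8 :=
  stmt15_general K n hn σ I A hA hy₀ htr
end

section
/- Let K be a totally real number field of degree n, O its ring of integers, Γ = SL₂(O), and for an ideal I with N(I) ≥ 40^{n/2}, let M_I = (ℍ²)ⁿ/Γ(I). Then every noncontractible closed geodesic α in M_I has length ℓ(α) ≥ (4/√n)·log(N(I)) − 2√n·log(40); combined with [Γ:Γ(I)] < N(I)³, this yields sys π₁(M_I) ≥ (4/(3√n))·log([Γ:Γ(I)]) − 2√n·log(40). -/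
/-!
For `A ∈ Γ(I)` the entries of `A - 1` lie in `I`, so `t = tr A - 2 = bc - (a - 1)(d - 1)` lies in
`I²`, whence `N(I)² ≤ |N(t)| = ∏ᵢ |σᵢ t|`. In the `i`-th factor, `A` acts by a matrix of trace
`2 + σᵢ t`, and an element of `SL₂(ℝ)` with trace `2 + s` moves every point of `ℍ` by at least
`2 log (|s| / 4)`, because `|tr g| ≤ 2 cosh (d(z, g z) / 2)`. Summing over the `n` embeddings gives
`∑ dᵢ ≥ 4 log N(I) - 2n log 4`, and Cauchy–Schwarz turns this into a bound for the product
distance `(∑ dᵢ²)^{1/2}`. The index bound is `|SL₂(O/I)| < |O/I|³`.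
-/

open Matrix MatrixGroups

namespace Matrix.SpecialLinearGroup

variable {R : Type*} [CommRing R]

lemma exists_left_inverse_first_row :
    ∃ u : R × R → R × R, ∀ A : SL(2, R),
      (u (A 0 0, A 0 1)).1 * A 0 0 + (u (A 0 0, A 0 1)).2 * A 0 1 = 1 := by
  have key : ∀ p : R × R, ∃ q : R × R,
      ∀ A : SL(2, R), (A 0 0, A 0 1) = p → q.1 * p.1 + q.2 * p.2 = 1 := by
    intro p
    by_cases hp : ∃ A : SL(2, R), (A 0 0, A 0 1) = p
    · obtain ⟨A, rfl⟩ := hp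
      refine ⟨(A 1 1, -A 1 0), fun _ _ => ?_⟩
      linear_combination (Matrix.det_fin_two A.1).symm.trans A.2
    · exact ⟨0, fun A hA => absurd ⟨A, hA⟩ hp⟩
  choose u hu using key
  exact ⟨u, fun A => hu _ A rfl⟩

/-- A matrix is determined by its first row `(a, b)` together with `x c + y d`, where
`x a + y b = 1`, and the first row never vanishes. -/
theorem card_lt_card_pow_three [Finite R] [Nontrivial R] :
    Nat.card SL(2, R) < Nat.card R ^ 3 := by
  classical
  have := Fintype.ofFinite R
  obtain ⟨u, hu⟩ := exists_left_inverse_first_row (R := R)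
  let f : SL(2, R) → R × R × R := fun A =>
    (A 0 0, A 0 1, (u (A 0 0, A 0 1)).1 * A 1 0 + (u (A 0 0, A 0 1)).2 * A 1 1)
  have hf : Function.Injective f := by
    intro A B hAB
    simp only [f, Prod.mk.injEq] at hAB
    obtain ⟨ha, hb, hrow⟩ := hAB
    rw [← ha, ← hb] at hrow
    set x := (u (A 0 0, A 0 1)).1
    set y := (u (A 0 0, A 0 1)).2
    have hxy : x * A 0 0 + y * A 0 1 = 1 := hu A
    have hA : A 0 0 * A 1 1 - A 0 1 * A 1 0 = 1 := (Matrix.det_fin_two A.1).symm.trans A.2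
    have hB : A 0 0 * B 1 1 - A 0 1 * B 1 0 = 1 := by
      rw [ha, hb]; exact (Matrix.det_fin_two B.1).symm.trans B.2
    have hc : A 1 0 = B 1 0 := by
      linear_combination (B 1 0 - A 1 0) * hxy - y * hA + y * hB + A 0 0 * hrow
    have hd : A 1 1 = B 1 1 := by
      linear_combination (B 1 1 - A 1 1) * hxy + x * hA - x * hB + A 0 1 * hrow
    ext i j
    fin_cases i <;> fin_cases j <;> assumption
  have h0 : (0, 0, 0) ∉ Set.range f := by
    rintro ⟨A, hA⟩
    simp only [f, Prod.mk.injEq] at hA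
    have hdet := (Matrix.det_fin_two A.1).symm.trans A.2
    rw [hA.1, hA.2.1] at hdet
    simp at hdet
  simpa [Nat.card_eq_fintype_card, pow_succ, mul_assoc] using
    Fintype.card_lt_of_injective_of_notMem f hf h0

theorem index_ker_map_lt {S : Type*} [CommRing S] [Finite S] [Nontrivial S] (f : R →+* S) :
    (map (n := Fin 2) f).ker.index < Nat.card S ^ 3 := by
  rw [Subgroup.index_ker]
  exact (Nat.card_le_card_of_injective _ Subtype.val_injective).trans_lt card_lt_card_pow_three

theorem trace_sub_two_mem_sq_of_mem_ker_s19 {I : Ideal R} {A : SL(2, R)}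
    (hA : A ∈ (map (Ideal.Quotient.mk I)).ker) : A.1.trace - 2 ∈ I ^ 2 := by
  have hA' : ∀ i j, Ideal.Quotient.mk I (A i j) = (1 : Matrix (Fin 2) (Fin 2) (R ⧸ I)) i j :=
    fun i j => by simpa using congr_arg (fun M : SL(2, R ⧸ I) => M i j) hA
  have hdet : A 0 0 * A 1 1 - A 0 1 * A 1 0 = 1 := (Matrix.det_fin_two A.1).symm.trans A.2
  have htrace : A.1.trace - 2 = A 0 1 * A 1 0 - (A 0 0 - 1) * (A 1 1 - 1) := by
    rw [Matrix.trace_fin_two]; linear_combination hdet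
  rw [htrace, sq]
  refine Ideal.sub_mem _ (Ideal.mul_mem_mul ?_ ?_) (Ideal.mul_mem_mul ?_ ?_) <;>
    simp [← Ideal.Quotient.eq_zero_iff_mem, hA']

end Matrix.SpecialLinearGroup

namespace UpperHalfPlane
open ComplexConjugate

theorem abs_trace_le_two_cosh_half_dist (g : SL(2, ℝ)) (z : ℍ) :
    |(g : Matrix (Fin 2) (Fin 2) ℝ).trace| ≤ 2 * Real.cosh (dist z (g • z) / 2) := by
  set γ := Matrix.SpecialLinearGroup.mapGL ℝ g
  have hdet : γ.det.val = 1 := by simp [γ]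
  have hv : denom γ z ≠ 0 := denom_ne_zero γ z
  have hsmul : ((g • z : ℍ) : ℂ) = num γ z / denom γ z :=
    coe_smul_of_det_pos (hdet ▸ one_pos) z
  have him : (g • z).im = z.im / ‖denom γ z‖ ^ 2 := by
    rw [show g • z = γ • z from rfl, im_smul_eq_div_normSq, hdet, abs_one, one_mul,
      Complex.normSq_eq_norm_sq]
  -- With `g • z = u / v`: `cosh (d / 2) = ‖z v̄ - ū‖ / (2 Im z)` and `Im (z v̄ - ū) = (tr g) Im z`.
  set w : ℂ := z * conj (denom γ z) - conj (num γ z)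
  have hw : w.im = (g : Matrix (Fin 2) (Fin 2) ℝ).trace * z.im := by
    simp [w, num, denom, Matrix.trace_fin_two, γ]; ring
  have hcosh : Real.cosh (dist z (g • z) / 2) = ‖w‖ / (2 * z.im) := by
    have hz : (z : ℂ) - conj (num γ z / denom γ z) = w / conj (denom γ z) := by
      rw [map_div₀, eq_div_iff (by simp)]
      field_simp
      ring
    have hsqrt : √(z.im * (z.im / ‖denom γ z‖ ^ 2)) = z.im / ‖denom γ z‖ := by
      rw [← mul_div_assoc, ← sq, Real.sqrt_div' _ (by positivity), Real.sqrt_sq z.im_pos.le,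
        Real.sqrt_sq (norm_nonneg _)]
    have hvpos : 0 < ‖denom γ z‖ := norm_pos_iff.mpr hv
    rw [cosh_half_dist, hsmul, him, hsqrt, Complex.dist_eq, hz, norm_div, Complex.norm_conj]
    field_simp
  have hw_le : |(g : Matrix (Fin 2) (Fin 2) ℝ).trace| * z.im ≤ ‖w‖ := by
    simpa [hw, abs_mul, abs_of_pos z.im_pos] using Complex.abs_im_le_norm w
  rw [hcosh, mul_div_assoc', le_div_iff₀ (by positivity)]
  linarith

theorem two_mul_log_abs_trace_sub_two_le_dist (g : SL(2, ℝ)) (z : ℍ) :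
    2 * Real.log (|(g : Matrix (Fin 2) (Fin 2) ℝ).trace - 2| / 4) ≤ dist z (g • z) := by
  set t := (g : Matrix (Fin 2) (Fin 2) ℝ).trace
  set δ := dist z (g • z) / 2 with hδ
  have htrace : |t| ≤ 2 * Real.cosh δ := abs_trace_le_two_cosh_half_dist g z
  have hcosh : |t - 2| / 4 ≤ Real.cosh δ := by
    have : |t - 2| ≤ |t| + 2 := (abs_sub t 2).trans_eq (by norm_num)
    linarith [Real.one_le_cosh δ]
  have hexp : Real.cosh δ ≤ Real.exp δ := by
    rw [← Real.sinh_add_cosh]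
    linarith [Real.sinh_nonneg_iff.mpr (by positivity : 0 ≤ δ)]
  suffices Real.log (|t - 2| / 4) ≤ δ by linarith
  rcases (abs_nonneg (t - 2)).eq_or_lt with h | h
  · rw [← h, zero_div, Real.log_zero]; positivity
  · exact (Real.log_le_iff_le_exp (by positivity)).mpr (hcosh.trans hexp)

end UpperHalfPlane

namespace Ideal

variable {S : Type*} [CommRing S] [IsDedekindDomain S] [Module.Free ℤ S] [Module.Finite ℤ S]

theorem natCast_mul_log_absNorm_le_log_abs_norm {I : Ideal S} {k : ℕ} {t : S} (ht : t ∈ I ^ k)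
    (ht0 : Algebra.norm ℤ t ≠ 0) :
    k * Real.log (absNorm I) ≤ Real.log |(Algebra.norm ℤ t : ℝ)| := by
  have hnorm : (1 : ℝ) ≤ |(Algebra.norm ℤ t : ℝ)| := by
    exact_mod_cast Int.one_le_abs ht0
  rcases Nat.eq_zero_or_pos (absNorm I) with hN | hN
  · simpa [hN] using Real.log_nonneg hnorm
  have hdvd : (absNorm I : ℤ) ^ k ∣ Algebra.norm ℤ t := by
    simpa using absNorm_dvd_norm_of_mem ht
  have hle : ((absNorm I : ℝ)) ^ k ≤ |(Algebra.norm ℤ t : ℝ)| := by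
    exact_mod_cast Int.le_of_dvd (abs_pos.mpr ht0) ((dvd_abs _ _).mpr hdvd)
  rw [← Real.log_pow]
  exact Real.log_le_log (by positivity) hle

end Ideal

namespace NumberField

variable {K : Type*} [Field K] [NumberField K]

theorem prod_realEmbeddings_eq_norm (hK : Fintype.card (K →+* ℝ) = Module.finrank ℚ K) (t : K) :
    ∏ φ : K →+* ℝ, φ t = Algebra.norm ℚ t := by
  let e : (K →+* ℝ) → (K →+* ℂ) := Complex.ofRealHom.comp
  have he : Function.Bijective e := by
    rw [Fintype.bijective_iff_injective_and_card, NumberField.Embeddings.card K ℂ, hK]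
    exact ⟨fun φ ψ h => RingHom.ext fun x => Complex.ofReal_injective (RingHom.congr_fun h x), rfl⟩
  have hprod : ∏ ψ : K →+* ℂ, ψ t = algebraMap ℚ ℂ (Algebra.norm ℚ t) := by
    rw [Algebra.norm_eq_prod_embeddings ℚ ℂ t]
    exact Fintype.prod_equiv (RingHom.equivRatAlgHom K ℂ) _ _ (fun _ => rfl)
  apply Complex.ofReal_injective
  rw [Complex.ofReal_prod,
    Fintype.prod_bijective e he (fun φ => ((φ t : ℝ) : ℂ)) (fun ψ => ψ t) (fun _ => rfl), hprod]
  simp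

end NumberField

namespace Real

theorem two_le_rpow_half {a : ℝ} (ha : 4 ≤ a) {n : ℕ} (hn : 0 < n) : 2 ≤ a ^ ((n : ℝ) / 2) := by
  have hpow : a ^ ((n : ℝ) / 2) = √a ^ n := by
    rw [Real.sqrt_eq_rpow, ← Real.rpow_mul_natCast (by linarith)]
    ring_nf
  have h2 : 2 ≤ √a := Real.le_sqrt_of_sq_le (by linarith)
  rw [hpow]
  exact h2.trans (le_self_pow₀ (by linarith) hn.ne')

theorem log_natCast_le_mul_log_of_le_pow {m N k : ℕ} (h : m ≤ N ^ k) :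
    Real.log m ≤ k * Real.log N := by
  rcases Nat.eq_zero_or_pos m with rfl | hm
  · rw [Nat.cast_zero, Real.log_zero]
    exact mul_nonneg k.cast_nonneg (Real.log_natCast_nonneg N)
  rw [← Real.log_pow]
  exact Real.log_le_log (by positivity) (by exact_mod_cast h)

theorem sum_div_sqrt_card_le_sqrt_sum_sq_s19 {ι : Type*} [Fintype ι] (d : ι → ℝ) :
    (∑ i, d i) / √(Fintype.card ι) ≤ √(∑ i, d i ^ 2) := by
  rcases isEmpty_or_nonempty ι with hι | hι
  · simp
  rw [div_le_iff₀ (by simp [Fintype.card_pos])]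
  simpa using Real.sum_mul_le_sqrt_mul_sqrt Finset.univ d 1

end Real

open NumberField

theorem four_mul_log_absNorm_sub_le_sum_dist {K : Type*} [Field K] [NumberField K] {n : ℕ}
    (hn : n = Module.finrank ℚ K) (σ : Fin n ≃ (K →+* ℝ)) {I : Ideal (𝓞 K)}
    {A : SL(2, 𝓞 K)} (hA : A ∈ (SpecialLinearGroup.map (Ideal.Quotient.mk I)).ker)
    (hA2 : A.1.trace ≠ 2) (z : Fin n → UpperHalfPlane) :
    4 * Real.log (Ideal.absNorm I) - 2 * n * Real.log 4 ≤
      ∑ i, dist (z i) (SpecialLinearGroup.map ((σ i).comp (algebraMap (𝓞 K) K)) A • z i) := by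
  set t : 𝓞 K := A.1.trace - 2
  set x : Fin n → ℝ := fun i => σ i (algebraMap (𝓞 K) K t)
  have hx : ∀ i, x i ≠ 0 := fun i =>
    (map_ne_zero _).mpr ((map_ne_zero_iff _ (IsFractionRing.injective (𝓞 K) K)).mpr
      (sub_ne_zero.mpr hA2))
  have htrace : ∀ i, (SpecialLinearGroup.map ((σ i).comp (algebraMap (𝓞 K) K)) A :
      Matrix (Fin 2) (Fin 2) ℝ).trace - 2 = x i := by
    intro i
    simp [x, t, Matrix.trace_fin_two, map_ofNat]
  have hK : Fintype.card (K →+* ℝ) = Module.finrank ℚ K := by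
    rw [← Fintype.card_congr σ, Fintype.card_fin, hn]
  have hprod : ∏ i, x i = Algebra.norm ℤ t := by
    rw [Equiv.prod_comp σ (fun φ => φ (algebraMap (𝓞 K) K t)), prod_realEmbeddings_eq_norm hK,
      ← Algebra.coe_norm_int]
    norm_cast
  have hnorm : 2 * Real.log (Ideal.absNorm I) ≤ Real.log |∏ i, x i| := by
    rw [hprod]
    refine Ideal.natCast_mul_log_absNorm_le_log_abs_norm
      (SpecialLinearGroup.trace_sub_two_mem_sq_of_mem_ker_s19 hA) ?_
    exact_mod_cast hprod ▸ Finset.prod_ne_zero_iff.mpr fun i _ => hx i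
  have hlog : ∑ i, Real.log (|x i| / 4) = Real.log |∏ i, x i| - n * Real.log 4 := by
    simp_rw [Real.log_div (abs_ne_zero.mpr (hx _)) four_ne_zero]
    rw [Finset.sum_sub_distrib, ← Real.log_prod fun i _ => abs_ne_zero.mpr (hx i),
      Finset.abs_prod]
    simp
  calc 4 * Real.log (Ideal.absNorm I) - 2 * n * Real.log 4
      ≤ ∑ i, 2 * Real.log (|x i| / 4) := by rw [← Finset.mul_sum, hlog]; linarith
    _ ≤ _ := Finset.sum_le_sum fun i _ =>
      htrace i ▸ UpperHalfPlane.two_mul_log_abs_trace_sub_two_le_dist _ _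

theorem four_div_sqrt_mul_log_absNorm_sub_le_sqrt_sum_sq_dist {K : Type*} [Field K]
    [NumberField K] {n : ℕ} (hn : n = Module.finrank ℚ K) (σ : Fin n ≃ (K →+* ℝ))
    {I : Ideal (𝓞 K)} {A : SL(2, 𝓞 K)}
    (hA : A ∈ (SpecialLinearGroup.map (Ideal.Quotient.mk I)).ker) (hA2 : A.1.trace ≠ 2)
    (z : Fin n → UpperHalfPlane) :
    4 / √n * Real.log (Ideal.absNorm I) - 2 * √n * Real.log 40 ≤
      √(∑ i, dist (z i)
        (SpecialLinearGroup.map ((σ i).comp (algebraMap (𝓞 K) K)) A • z i) ^ 2) := by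
  have hn0 : 0 < n := hn ▸ Module.finrank_pos
  have hsqrt : √(n : ℝ) * √(n : ℝ) = n := Real.mul_self_sqrt n.cast_nonneg
  calc _ ≤ (4 * Real.log (Ideal.absNorm I) - 2 * n * Real.log 4) / √n := by
        rw [le_div_iff₀ (by positivity), sub_mul, ← hsqrt]
        field_simp
        gcongr <;> norm_num
    _ ≤ _ := div_le_div_of_nonneg_right (four_mul_log_absNorm_sub_le_sum_dist hn σ hA hA2 z)
        (Real.sqrt_nonneg _)
    _ ≤ _ := by simpa using Real.sum_div_sqrt_card_le_sqrt_sum_sq_s19 (ι := Fin n) _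

theorem stmt19_general (K : Type*) [Field K] [NumberField K]
    (n : ℕ) (hn : n = Module.finrank ℚ K)
    (σ : Fin n ≃ (K →+* ℝ))
    (I : Ideal (NumberField.RingOfIntegers K))
    (hnorm : (Ideal.absNorm I : ℝ) ≥ 40 ^ ((n : ℝ) / 2)) :
    (Matrix.SpecialLinearGroup.map (n := Fin 2) (Ideal.Quotient.mk I)).ker.index <
      Ideal.absNorm I ^ 3 ∧
    ∀ A : SL(2, NumberField.RingOfIntegers K),
      A ∈ (Matrix.SpecialLinearGroup.map (Ideal.Quotient.mk I)).ker →
      (algebraMap (NumberField.RingOfIntegers K) K (Matrix.trace A.1) - 2) / 2 ≠ 0 →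
      ∀ z : Fin n → UpperHalfPlane,
        Real.sqrt (∑ i, (dist (z i)
            ((Matrix.SpecialLinearGroup.map
              ((σ i).comp (algebraMap (NumberField.RingOfIntegers K) K)) A) • z i)) ^ 2) ≥
          (4 / Real.sqrt n) * Real.log (Ideal.absNorm I) - 2 * Real.sqrt n * Real.log 40 ∧
        Real.sqrt (∑ i, (dist (z i)
            ((Matrix.SpecialLinearGroup.map
              ((σ i).comp (algebraMap (NumberField.RingOfIntegers K) K)) A) • z i)) ^ 2) ≥
          (4 / (3 * Real.sqrt n)) *
            Real.log ((Matrix.SpecialLinearGroup.map (n := Fin 2)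
              (Ideal.Quotient.mk I)).ker.index) - 2 * Real.sqrt n * Real.log 40 := by
  have hN : 2 ≤ Ideal.absNorm I := by
    exact_mod_cast (Real.two_le_rpow_half (by norm_num) (hn ▸ Module.finrank_pos)).trans hnorm
  have : Finite (𝓞 K ⧸ I) := (Ideal.absNorm_ne_zero_iff I).mp (by omega)
  have hcard : Nat.card (𝓞 K ⧸ I) = Ideal.absNorm I := (Submodule.cardQuot_apply _).symm
  have : Nontrivial (𝓞 K ⧸ I) := Finite.one_lt_card_iff_nontrivial.mp (by omega)
  have hindex := hcard ▸ SpecialLinearGroup.index_ker_map_lt (Ideal.Quotient.mk I)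
  refine ⟨hindex, fun A hA hy0 z => ?_⟩
  have hA2 : A.1.trace ≠ 2 := fun h => hy0 (by rw [h, map_ofNat, sub_self, zero_div])
  have hbound := four_div_sqrt_mul_log_absNorm_sub_le_sqrt_sum_sq_dist hn σ hA hA2 z
  refine ⟨hbound, le_trans (sub_le_sub_right ?_ _) hbound⟩
  calc _ ≤ 4 / (3 * √n) * (3 * Real.log (Ideal.absNorm I)) := by
        gcongr
        exact_mod_cast Real.log_natCast_le_mul_log_of_le_pow hindex.le
    _ = _ := by field_simp

/-- Main theorem: for `N(I) ≥ 40^{n/2}`, every element `A ∈ Γ(I)` with `y₀ ≠ 0`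
(these are exactly the elements whose translation axes project to the noncontractible
closed geodesics of `M_I = (ℍ²)ⁿ/Γ(I)`) displaces every point of `(ℍ²)ⁿ` by at least
`(4/√n) log N(I) − 2√n log 40`; combined with `[Γ : Γ(I)] < N(I)³` this gives
`sys π₁(M_I) ≥ (4/(3√n)) log [Γ:Γ(I)] − 2√n log 40`. -/
theorem stmt19 (K : Type*) [Field K] [NumberField K]
    (n : ℕ) (hn : n = Module.finrank ℚ K)
    (σ : Fin n ≃ (K →+* ℝ))
    (I : Ideal (NumberField.RingOfIntegers K)) (hI : I ≠ ⊥)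
    (hnorm : (Ideal.absNorm I : ℝ) ≥ 40 ^ ((n : ℝ) / 2)) :
    (Matrix.SpecialLinearGroup.map (n := Fin 2) (Ideal.Quotient.mk I)).ker.index <
      Ideal.absNorm I ^ 3 ∧
    ∀ A : SL(2, NumberField.RingOfIntegers K),
      A ∈ (Matrix.SpecialLinearGroup.map (Ideal.Quotient.mk I)).ker →
      (algebraMap (NumberField.RingOfIntegers K) K (Matrix.trace A.1) - 2) / 2 ≠ 0 →
      ∀ z : Fin n → UpperHalfPlane,
        Real.sqrt (∑ i, (dist (z i)
            ((Matrix.SpecialLinearGroup.map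
              ((σ i).comp (algebraMap (NumberField.RingOfIntegers K) K)) A) • z i)) ^ 2) ≥
          (4 / Real.sqrt n) * Real.log (Ideal.absNorm I) - 2 * Real.sqrt n * Real.log 40 ∧
        Real.sqrt (∑ i, (dist (z i)
            ((Matrix.SpecialLinearGroup.map
              ((σ i).comp (algebraMap (NumberField.RingOfIntegers K) K)) A) • z i)) ^ 2) ≥
          (4 / (3 * Real.sqrt n)) *
            Real.log ((Matrix.SpecialLinearGroup.map (n := Fin 2)
              (Ideal.Quotient.mk I)).ker.index) - 2 * Real.sqrt n * Real.log 40 :=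
  stmt19_general K n hn σ I hnorm
end
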